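/- arXiv:2310.03774 — 3 statements merged into one kernel-verified Lean document; each statement's English description precedes it below -/
import Mathlib

section
/- Let x_0 ∈ ℝⁿ and let u* = (u*_1,…,u*_n) be an admissible control profile of the delay-free game with trajectory y* = y_{u*} from y_0 = x_0. If for every player i and almost every t ∈ [0,T] one has u*_i(t) = −(1/r_i)·B̂_iᵀ·exp((T−t)Λᵀ)·( (Ŵ_i + ((1−ω_i)/d_i)·L̂_i)·y*(T) − exp(τΛᵀ)·W_i·x_0 ), then u* is an open-loop Nash equilibrium of the stubborn delay-free game with costs J̃̂_i. -/
open Matrix MeasureTheory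
open scoped Matrix

noncomputable section

/-- The matrix exponential of a real `n × n` matrix. -/
def mexp {n : ℕ} (A : Matrix (Fin n) (Fin n) ℝ) : Matrix (Fin n) (Fin n) ℝ :=
  NormedSpace.exp A

/-- An admissible control of the delayed game: a bounded measurable function `u : ℝ → ℝ`
with `u s = 0` for `s < 0`. -/
def AdmissibleD (u : ℝ → ℝ) : Prop :=
  Measurable u ∧ (∃ C, ∀ s, |u s| ≤ C) ∧ ∀ s < 0, u s = 0

/-- An admissible control of the delay-free game: a bounded measurable function. -/
def AdmissibleF (u : ℝ → ℝ) : Prop :=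
  Measurable u ∧ ∃ C, ∀ s, |u s| ≤ C

/-- Data of the differential games of opinion formation: the system matrix `Λ`
(the continuous-time Hegselmann–Krause matrix `Λ = D⁻¹A − I`), the input delay `τ`,
the terminal time `tf`, and for each player `i` the input vector `B i`, the control
weight `r i`, the neighborhood size `d i = |𝒩ᵢ|`, the agent-`i` graph Laplacian `L i`
and the stubbornness coefficient `ω i`. -/
structure GameData (n : ℕ) where
  Λ : Matrix (Fin n) (Fin n) ℝ
  τ : ℝ
  tf : ℝ
  B : Fin n → Fin n → ℝ
  r : Fin n → ℝ
  d : Fin n → ℝ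
  L : Fin n → Matrix (Fin n) (Fin n) ℝ
  ω : Fin n → ℝ

namespace GameData

variable {n : ℕ} (G : GameData n)

/-- The standing hypotheses: `τ ≥ 0`, `t_f > τ`, `rᵢ > 0`, `dᵢ > 0`, each `Lᵢ` symmetric
positive semidefinite, and `ωᵢ ∈ [0,1]`. -/
def Valid : Prop :=
  0 ≤ G.τ ∧ G.τ < G.tf ∧ (∀ i, 0 < G.r i) ∧ (∀ i, 0 < G.d i) ∧
    (∀ i, (G.L i).PosSemidef) ∧ ∀ i, G.ω i ∈ Set.Icc (0 : ℝ) 1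

/-- `T = t_f − τ`. -/
def T : ℝ := G.tf - G.τ

/-- `B̂ᵢ = exp(−τΛ)·Bᵢ`. -/
def Bhat (i : Fin n) : Fin n → ℝ := (mexp ((-G.τ) • G.Λ)).mulVec (G.B i)

/-- `L̂ᵢ = exp(τΛᵀ)·Lᵢ·exp(τΛ)`. -/
def Lhat (i : Fin n) : Matrix (Fin n) (Fin n) ℝ :=
  mexp (G.τ • G.Λᵀ) * G.L i * mexp (G.τ • G.Λ)

/-- `Sᵢ = (1/rᵢ)·B̂ᵢ·B̂ᵢᵀ`. -/
def S (i : Fin n) : Matrix (Fin n) (Fin n) ℝ :=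
  (1 / G.r i) • vecMulVec (G.Bhat i) (G.Bhat i)

/-- The matrix `∫₀ᵗ exp((t−s)Λ)·Sᵢ·exp((T−s)Λᵀ) ds` (entrywise integral). -/
def Phi (T' : ℝ) (i : Fin n) (t : ℝ) : Matrix (Fin n) (Fin n) ℝ :=
  Matrix.of fun a b =>
    ∫ s in (0:ℝ)..t, (mexp ((t - s) • G.Λ) * G.S i * mexp ((T' - s) • G.Λᵀ)) a b

/-- `Ψᵢ = ∫₀ᵀ exp((T−s)Λ)·Sᵢ·exp((T−s)Λᵀ) ds` with `T = t_f − τ`. -/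
def Psi (i : Fin n) : Matrix (Fin n) (Fin n) ℝ := G.Phi G.T i G.T

/-- `H = I + ∑ⱼ (1/dⱼ)·Ψⱼ·L̂ⱼ`. -/
def H : Matrix (Fin n) (Fin n) ℝ :=
  1 + ∑ j : Fin n, (1 / G.d j) • (G.Psi j * G.Lhat j)

/-- `Wᵢ`: the matrix whose `(i,i)` entry is `ωᵢ` and all other entries are `0`. -/
def W (i : Fin n) : Matrix (Fin n) (Fin n) ℝ := Matrix.single i i (G.ω i)

/-- `Ŵᵢ = exp(τΛᵀ)·Wᵢ·exp(τΛ)`. -/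
def What (i : Fin n) : Matrix (Fin n) (Fin n) ℝ :=
  mexp (G.τ • G.Λᵀ) * G.W i * mexp (G.τ • G.Λ)

/-- `Ĥ = I + ∑ⱼ Ψⱼ·(Ŵⱼ + ((1−ωⱼ)/dⱼ)·L̂ⱼ)`. -/
def Hhat : Matrix (Fin n) (Fin n) ℝ :=
  1 + ∑ j : Fin n, G.Psi j * (G.What j + ((1 - G.ω j) / G.d j) • G.Lhat j)

/-- The trajectory of the delayed game:
`x_u(t) = exp(tΛ)·x₀ + ∫₀ᵗ exp((t−s)Λ)·(∑ⱼ Bⱼ·uⱼ(s−τ)) ds`. -/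
def xtraj (x0 : Fin n → ℝ) (u : Fin n → ℝ → ℝ) (t : ℝ) : Fin n → ℝ :=
  (mexp (t • G.Λ)).mulVec x0 +
    ∫ s in (0:ℝ)..t, (mexp ((t - s) • G.Λ)).mulVec (∑ j : Fin n, u j (s - G.τ) • G.B j)

/-- The trajectory of the delay-free game:
`y_u(t) = exp(tΛ)·y₀ + ∫₀ᵗ exp((t−s)Λ)·(∑ⱼ B̂ⱼ·uⱼ(s)) ds`. -/
def ytraj (y0 : Fin n → ℝ) (u : Fin n → ℝ → ℝ) (t : ℝ) : Fin n → ℝ :=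
  (mexp (t • G.Λ)).mulVec y0 +
    ∫ s in (0:ℝ)..t, (mexp ((t - s) • G.Λ)).mulVec (∑ j : Fin n, u j s • G.Bhat j)

/-- Player `i`'s cost in the delayed game:
`Jᵢ(u) = (1/dᵢ)·x_u(t_f)ᵀ·Lᵢ·x_u(t_f) + ∫₀^{t_f} rᵢ·uᵢ(t−τ)² dt`. -/
def J (x0 : Fin n → ℝ) (i : Fin n) (u : Fin n → ℝ → ℝ) : ℝ :=
  (1 / G.d i) * (G.xtraj x0 u G.tf ⬝ᵥ (G.L i).mulVec (G.xtraj x0 u G.tf)) +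
    ∫ t in (0:ℝ)..G.tf, G.r i * u i (t - G.τ) ^ 2

/-- Player `i`'s cost in the delay-free game:
`Ĵᵢ(u) = (1/dᵢ)·y_u(T)ᵀ·L̂ᵢ·y_u(T) + ∫₀ᵀ rᵢ·uᵢ(t)² dt`. -/
def JF (y0 : Fin n → ℝ) (i : Fin n) (u : Fin n → ℝ → ℝ) : ℝ :=
  (1 / G.d i) * (G.ytraj y0 u G.T ⬝ᵥ (G.Lhat i).mulVec (G.ytraj y0 u G.T)) +
    ∫ t in (0:ℝ)..G.T, G.r i * u i t ^ 2

/-- Player `i`'s stubborn cost in the delayed game. -/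
def Jstub (x0 : Fin n → ℝ) (i : Fin n) (u : Fin n → ℝ → ℝ) : ℝ :=
  (G.xtraj x0 u G.tf - x0) ⬝ᵥ (G.W i).mulVec (G.xtraj x0 u G.tf - x0) +
    ((1 - G.ω i) / G.d i) * (G.xtraj x0 u G.tf ⬝ᵥ (G.L i).mulVec (G.xtraj x0 u G.tf)) +
    ∫ t in (0:ℝ)..G.tf, G.r i * u i (t - G.τ) ^ 2

/-- Player `i`'s stubborn cost in the delay-free game, with reference opinion `x₀`. -/
def JstubF (x0 y0 : Fin n → ℝ) (i : Fin n) (u : Fin n → ℝ → ℝ) : ℝ :=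
  ((mexp (G.τ • G.Λ)).mulVec (G.ytraj y0 u G.T) - x0) ⬝ᵥ
      (G.W i).mulVec ((mexp (G.τ • G.Λ)).mulVec (G.ytraj y0 u G.T) - x0) +
    ((1 - G.ω i) / G.d i) * (G.ytraj y0 u G.T ⬝ᵥ (G.Lhat i).mulVec (G.ytraj y0 u G.T)) +
    ∫ t in (0:ℝ)..G.T, G.r i * u i t ^ 2

/-- Open-loop Nash equilibrium of the delayed game. -/
def NashD (x0 : Fin n → ℝ) (u : Fin n → ℝ → ℝ) : Prop :=
  (∀ i, AdmissibleD (u i)) ∧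
    ∀ i, ∀ v : ℝ → ℝ, AdmissibleD v →
      G.J x0 i u ≤ G.J x0 i (Function.update u i v)

/-- Open-loop Nash equilibrium of the delay-free game. -/
def NashF (y0 : Fin n → ℝ) (u : Fin n → ℝ → ℝ) : Prop :=
  (∀ i, AdmissibleF (u i)) ∧
    ∀ i, ∀ v : ℝ → ℝ, AdmissibleF v →
      G.JF y0 i u ≤ G.JF y0 i (Function.update u i v)

/-- Open-loop Nash equilibrium of the stubborn delayed game. -/
def NashStubD (x0 : Fin n → ℝ) (u : Fin n → ℝ → ℝ) : Prop :=
  (∀ i, AdmissibleD (u i)) ∧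
    ∀ i, ∀ v : ℝ → ℝ, AdmissibleD v →
      G.Jstub x0 i u ≤ G.Jstub x0 i (Function.update u i v)

/-- Open-loop Nash equilibrium of the stubborn delay-free game. -/
def NashStubF (x0 y0 : Fin n → ℝ) (u : Fin n → ℝ → ℝ) : Prop :=
  (∀ i, AdmissibleF (u i)) ∧
    ∀ i, ∀ v : ℝ → ℝ, AdmissibleF v →
      G.JstubF x0 y0 i u ≤ G.JstubF x0 y0 i (Function.update u i v)

end GameData

/-! The terminal part of the stubborn cost is a convex quadratic in the terminal state, and the
terminal state is affine in each control: a deviation `v = uᵢ + w` of player `i` shifts `y(T)` by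
`δ = ∫₀ᵀ w(s) exp((T-s)Λ) B̂ᵢ ds`. Convexity bounds the new terminal cost below by its tangent at
`y(T)`, and the control cost becomes `∫ rᵢ uᵢ² + 2 rᵢ ∫ w uᵢ + rᵢ ∫ w²`. Transposing the
exponential, the tangent term `δ ⬝ᵥ g` (with `g` half the gradient at `y(T)`) is
`∫ w(s) B̂ᵢᵀ exp((T-s)Λᵀ) g ds`, which the optimality condition turns into `-rᵢ ∫ w uᵢ`. So the
first-order terms cancel, and what is left, `rᵢ ∫ w²` plus the convexity gap, is nonnegative. -/

namespace AdmissibleF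

variable {f g : ℝ → ℝ}

lemma sub (hf : AdmissibleF f) (hg : AdmissibleF g) : AdmissibleF fun s => f s - g s := by
  obtain ⟨hfm, C, hC⟩ := hf
  obtain ⟨hgm, D, hD⟩ := hg
  exact ⟨hfm.sub hgm, C + D, fun s => (abs_sub _ _).trans (add_le_add (hC s) (hD s))⟩

lemma mul (hf : AdmissibleF f) (hg : AdmissibleF g) : AdmissibleF fun s => f s * g s := by
  obtain ⟨hfm, C, hC⟩ := hf
  obtain ⟨hgm, D, hD⟩ := hg
  refine ⟨hfm.mul hgm, C * D, fun s => ?_⟩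
  rw [abs_mul]
  exact mul_le_mul (hC s) (hD s) (abs_nonneg _) ((abs_nonneg _).trans (hC s))

lemma intervalIntegrable (hf : AdmissibleF f) (a b : ℝ) :
    IntervalIntegrable f volume a b := by
  obtain ⟨hfm, C, hC⟩ := hf
  rw [intervalIntegrable_iff]
  exact Measure.integrableOn_of_bounded measure_Ioc_lt_top.ne hfm.aestronglyMeasurable
    (ae_of_all _ hC)

lemma intervalIntegrable_smul {E : Type*} [NormedAddCommGroup E] [NormedSpace ℝ E]
    (hf : AdmissibleF f) {g : ℝ → E} (hg : Continuous g) (a b : ℝ) :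
    IntervalIntegrable (fun s => f s • g s) volume a b :=
  (hf.intervalIntegrable a b).smul_continuousOn hg.continuousOn

end AdmissibleF

lemma intervalIntegral_mul_sq_eq {f g : ℝ → ℝ} (hf : AdmissibleF f) (hg : AdmissibleF g)
    (r a b : ℝ) :
    ∫ s in a..b, r * g s ^ 2 = (∫ s in a..b, r * f s ^ 2) +
      2 * r * (∫ s in a..b, (g s - f s) * f s) + r * ∫ s in a..b, (g s - f s) ^ 2 := by
  have hff : IntervalIntegrable (fun s => f s ^ 2) volume a b := by
    simpa only [sq] using (hf.mul hf).intervalIntegrable a b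
  have hwf : IntervalIntegrable (fun s => (g s - f s) * f s) volume a b :=
    ((hg.sub hf).mul hf).intervalIntegrable a b
  have hww : IntervalIntegrable (fun s => (g s - f s) ^ 2) volume a b := by
    simpa only [sq] using ((hg.sub hf).mul (hg.sub hf)).intervalIntegrable a b
  rw [intervalIntegral.integral_congr (g := fun s =>
      r * f s ^ 2 + (2 * r * ((g s - f s) * f s) + r * (g s - f s) ^ 2)) fun s _ => by ring,
    intervalIntegral.integral_add (hff.const_mul r) ((hwf.const_mul _).add (hww.const_mul r)),
    intervalIntegral.integral_add (hwf.const_mul _) (hww.const_mul r),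
    intervalIntegral.integral_const_mul, intervalIntegral.integral_const_mul,
    intervalIntegral.integral_const_mul, add_assoc]

lemma continuous_mexp_smul {n : ℕ} (A : Matrix (Fin n) (Fin n) ℝ) :
    Continuous fun t : ℝ => mexp (t • A) := by
  let : NormedRing (Matrix (Fin n) (Fin n) ℝ) := Matrix.linftyOpNormedRing
  let : NormedAlgebra ℝ (Matrix (Fin n) (Fin n) ℝ) := Matrix.linftyOpNormedAlgebra
  let : NormedAlgebra ℚ (Matrix (Fin n) (Fin n) ℝ) := NormedAlgebra.restrictScalars ℚ ℝ _
  exact NormedSpace.exp_continuous.comp (continuous_id.smul continuous_const)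

lemma continuous_mexp_sub_smul_mulVec {n : ℕ} (A : Matrix (Fin n) (Fin n) ℝ) (t : ℝ)
    (b : Fin n → ℝ) : Continuous fun s => mexp ((t - s) • A) *ᵥ b :=
  ((continuous_mexp_smul A).comp (continuous_const.sub continuous_id)).matrix_mulVec
    continuous_const

lemma Matrix.PosSemidef.dotProduct_mulVec_add_le {m : Type*} [Fintype m]
    {A : Matrix m m ℝ} (hA : A.PosSemidef) (x y : m → ℝ) :
    x ⬝ᵥ A *ᵥ x + 2 * (y ⬝ᵥ A *ᵥ x) ≤ (x + y) ⬝ᵥ A *ᵥ (x + y) := by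
  have hswap : x ⬝ᵥ A *ᵥ y = y ⬝ᵥ A *ᵥ x := by
    rw [dotProduct_mulVec, ← mulVec_transpose, (isHermitian_iff_isSymm.1 hA.isHermitian).eq,
      dotProduct_comm]
  have hy : 0 ≤ y ⬝ᵥ A *ᵥ y := by simpa using hA.dotProduct_mulVec_nonneg y
  rw [mulVec_add, dotProduct_add, add_dotProduct, add_dotProduct, hswap]
  linarith

lemma intervalIntegral_dotProduct {m : Type*} [Fintype m] {f : ℝ → m → ℝ} {a b : ℝ}
    {μ : Measure ℝ} (hf : IntervalIntegrable f μ a b) (q : m → ℝ) :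
    (∫ s in a..b, f s ∂μ) ⬝ᵥ q = ∫ s in a..b, f s ⬝ᵥ q ∂μ := by
  classical
  simp only [dotProduct_comm _ q]
  exact ((LinearMap.toContinuousLinearMap (dotProductEquiv ℝ m q)).intervalIntegral_comp_comm
    hf).symm

namespace GameData

variable {n : ℕ} (G : GameData n)

lemma ytraj_eq_integral_sum (y0 : Fin n → ℝ) (p : Fin n → ℝ → ℝ) (t : ℝ) :
    G.ytraj y0 p t = mexp (t • G.Λ) *ᵥ y0 +
      ∫ s in (0:ℝ)..t, ∑ j, p j s • (mexp ((t - s) • G.Λ) *ᵥ G.Bhat j) := by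
  simp only [ytraj, mulVec_sum, mulVec_smul]

lemma ytraj_update {y0 : Fin n → ℝ} {u : Fin n → ℝ → ℝ} {v : ℝ → ℝ}
    (hu : ∀ j, AdmissibleF (u j)) (hv : AdmissibleF v) (i : Fin n) (t : ℝ) :
    G.ytraj y0 (Function.update u i v) t = G.ytraj y0 u t +
      ∫ s in (0:ℝ)..t, (v s - u i s) • (mexp ((t - s) • G.Λ) *ᵥ G.Bhat i) := by
  have hcont (j : Fin n) := continuous_mexp_sub_smul_mulVec G.Λ t (G.Bhat j)
  have hsum : IntervalIntegrable (fun s => ∑ j, u j s • (mexp ((t - s) • G.Λ) *ᵥ G.Bhat j))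
      volume 0 t := by
    simpa only [Finset.sum_fn] using
      IntervalIntegrable.sum Finset.univ fun j _ => (hu j).intervalIntegrable_smul (hcont j) 0 t
  rw [ytraj_eq_integral_sum, ytraj_eq_integral_sum, add_assoc,
    ← intervalIntegral.integral_add hsum ((hv.sub (hu i)).intervalIntegrable_smul (hcont i) 0 t)]
  congr 1
  refine intervalIntegral.integral_congr fun s _ => ?_
  rw [← Finset.add_sum_erase _ _ (Finset.mem_univ i),
    ← Finset.add_sum_erase _ _ (Finset.mem_univ i),
    Finset.sum_congr rfl fun j hj => by rw [Function.update_of_ne (Finset.ne_of_mem_erase hj)],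
    Function.update_self, sub_smul (v s)]
  abel

lemma mexp_smul_transpose (t : ℝ) : mexp (t • G.Λᵀ) = (mexp (t • G.Λ))ᵀ := by
  rw [← transpose_smul]
  exact Matrix.exp_transpose _

lemma W_posSemidef {i : Fin n} (hω : 0 ≤ G.ω i) : (G.W i).PosSemidef := by
  rw [W, ← diagonal_single]
  exact PosSemidef.diagonal (Pi.single_nonneg.2 hω)

lemma Lhat_posSemidef {i : Fin n} (hL : (G.L i).PosSemidef) : (G.Lhat i).PosSemidef := by
  simpa [Lhat, mexp_smul_transpose] using hL.conjTranspose_mul_mul_same (mexp (G.τ • G.Λ))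

def stubTerminalCost (x0 : Fin n → ℝ) (i : Fin n) (z : Fin n → ℝ) : ℝ :=
  (mexp (G.τ • G.Λ) *ᵥ z - x0) ⬝ᵥ G.W i *ᵥ (mexp (G.τ • G.Λ) *ᵥ z - x0) +
    ((1 - G.ω i) / G.d i) * (z ⬝ᵥ G.Lhat i *ᵥ z)

/-- Half the gradient of `stubTerminalCost x0 i` at `z`. -/
def stubTerminalGrad (x0 : Fin n → ℝ) (i : Fin n) (z : Fin n → ℝ) : Fin n → ℝ :=
  (G.What i + ((1 - G.ω i) / G.d i) • G.Lhat i) *ᵥ z -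
    mexp (G.τ • G.Λᵀ) *ᵥ (G.W i *ᵥ x0)

lemma JstubF_eq (x0 y0 : Fin n → ℝ) (i : Fin n) (u : Fin n → ℝ → ℝ) :
    G.JstubF x0 y0 i u = G.stubTerminalCost x0 i (G.ytraj y0 u G.T) +
      ∫ t in (0:ℝ)..G.T, G.r i * u i t ^ 2 := rfl

lemma stubTerminalCost_add_ge {i : Fin n} (hω : G.ω i ∈ Set.Icc (0:ℝ) 1) (hd : 0 ≤ G.d i)
    (hL : (G.L i).PosSemidef) (x0 z δ : Fin n → ℝ) :
    G.stubTerminalCost x0 i z + 2 * (δ ⬝ᵥ G.stubTerminalGrad x0 i z) ≤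
      G.stubTerminalCost x0 i (z + δ) := by
  have hc : 0 ≤ (1 - G.ω i) / G.d i := div_nonneg (sub_nonneg.2 hω.2) hd
  have hgrad : δ ⬝ᵥ G.stubTerminalGrad x0 i z =
      mexp (G.τ • G.Λ) *ᵥ δ ⬝ᵥ G.W i *ᵥ (mexp (G.τ • G.Λ) *ᵥ z - x0) +
        (1 - G.ω i) / G.d i * (δ ⬝ᵥ G.Lhat i *ᵥ z) := by
    simp only [stubTerminalGrad, What, mexp_smul_transpose, add_mulVec, smul_mulVec,
      ← mulVec_mulVec, mulVec_sub, dotProduct_add, dotProduct_sub, dotProduct_smul,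
      dotProduct_transpose_mulVec, smul_eq_mul, dotProduct_comm (G.W i *ᵥ _)]
    ring
  have hW := (G.W_posSemidef hω.1).dotProduct_mulVec_add_le
    (mexp (G.τ • G.Λ) *ᵥ z - x0) (mexp (G.τ • G.Λ) *ᵥ δ)
  have hLhat := (G.Lhat_posSemidef hL).dotProduct_mulVec_add_le z δ
  rw [hgrad, stubTerminalCost, stubTerminalCost, mulVec_add, add_sub_right_comm]
  linarith [mul_le_mul_of_nonneg_left hLhat hc]

lemma JstubF_le_update {x0 y0 : Fin n → ℝ} {u : Fin n → ℝ → ℝ} {i : Fin n} {v : ℝ → ℝ}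
    (hT : 0 ≤ G.T) (hr : 0 < G.r i) (hω : G.ω i ∈ Set.Icc (0:ℝ) 1) (hd : 0 ≤ G.d i)
    (hL : (G.L i).PosSemidef) (hu : ∀ j, AdmissibleF (u j))
    (hopt : ∀ᵐ t ∂(volume.restrict (Set.Icc (0:ℝ) G.T)), u i t = -(1 / G.r i) *
      (G.Bhat i ⬝ᵥ mexp ((G.T - t) • G.Λᵀ) *ᵥ G.stubTerminalGrad x0 i (G.ytraj y0 u G.T)))
    (hv : AdmissibleF v) :
    G.JstubF x0 y0 i u ≤ G.JstubF x0 y0 i (Function.update u i v) := by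
  set y := G.ytraj y0 u G.T
  set δ := ∫ s in (0:ℝ)..G.T, (v s - u i s) • (mexp ((G.T - s) • G.Λ) *ᵥ G.Bhat i)
  have hcross : δ ⬝ᵥ G.stubTerminalGrad x0 i y =
      -(G.r i * ∫ s in (0:ℝ)..G.T, (v s - u i s) * u i s) := by
    rw [intervalIntegral_dotProduct ((hv.sub (hu i)).intervalIntegrable_smul
        (continuous_mexp_sub_smul_mulVec G.Λ G.T (G.Bhat i)) 0 G.T),
      ← intervalIntegral.integral_const_mul, ← intervalIntegral.integral_neg]
    refine intervalIntegral.integral_congr_ae ?_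
    filter_upwards [(ae_restrict_iff' measurableSet_Icc).1 hopt] with s hs hmem
    rw [Set.uIoc_of_le hT] at hmem
    have hadj : mexp ((G.T - s) • G.Λ) *ᵥ G.Bhat i ⬝ᵥ G.stubTerminalGrad x0 i y =
        G.Bhat i ⬝ᵥ mexp ((G.T - s) • G.Λᵀ) *ᵥ G.stubTerminalGrad x0 i y := by
      rw [mexp_smul_transpose, dotProduct_transpose_mulVec, dotProduct_comm]
    rw [smul_dotProduct, hadj, hs (Set.Ioc_subset_Icc_self hmem), smul_eq_mul]
    field_simp
  have hw2 : 0 ≤ ∫ s in (0:ℝ)..G.T, (v s - u i s) ^ 2 :=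
    intervalIntegral.integral_nonneg hT fun _ _ => sq_nonneg _
  have hterm := G.stubTerminalCost_add_ge hω hd hL x0 y δ
  rw [JstubF_eq, JstubF_eq, G.ytraj_update hu hv, Function.update_self,
    intervalIntegral_mul_sq_eq (hu i) hv]
  linarith [mul_nonneg hr.le hw2]

end GameData

/-- Sufficiency of the Pontryagin condition in the stubborn delay-free game: if an
admissible profile `u` with trajectory `y* = y_u` from `y₀ = x₀` satisfies, for every
player `i` and almost every `t ∈ [0,T]`,
`uᵢ(t) = −(1/rᵢ)·B̂ᵢᵀ·exp((T−t)Λᵀ)·((Ŵᵢ + ((1−ωᵢ)/dᵢ)·L̂ᵢ)·y*(T) − exp(τΛᵀ)·Wᵢ·x₀)`,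
then `u` is an open-loop Nash equilibrium of the stubborn delay-free game. -/
theorem statement_13 {n : ℕ} (G : GameData n) (hG : G.Valid) (x0 : Fin n → ℝ)
    (u : Fin n → ℝ → ℝ) (hu : ∀ i, AdmissibleF (u i))
    (hopt : ∀ i, ∀ᵐ t ∂(volume.restrict (Set.Icc (0:ℝ) G.T)),
      u i t = -(1 / G.r i) *
        (G.Bhat i ⬝ᵥ (mexp ((G.T - t) • G.Λᵀ)).mulVec
          ((G.What i + ((1 - G.ω i) / G.d i) • G.Lhat i).mulVec (G.ytraj x0 u G.T) -
            (mexp (G.τ • G.Λᵀ)).mulVec ((G.W i).mulVec x0)))) :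
    G.NashStubF x0 x0 u := by
  obtain ⟨-, hτ, hr, hd, hL, hω⟩ := hG
  have hT : 0 ≤ G.T := sub_nonneg.2 hτ.le
  exact ⟨hu, fun i v hv => G.JstubF_le_update hT (hr i) (hω i) (hd i).le (hL i) hu (hopt i) hv⟩
end
end

section
/- Let x_0 ∈ ℝⁿ and suppose y : [0,T] → ℝⁿ satisfies the integral equation y(t) = exp(tΛ)·x_0 − ∑_{j=1}^n ( ∫₀ᵗ exp((t−s)Λ)·S_j·exp((T−s)Λᵀ) ds )·( (Ŵ_j + ((1−ω_j)/d_j)·L̂_j)·y(T) − exp(τΛᵀ)·W_j·x_0 ) for all t ∈ [0,T]. Then Ĥ·y(T) = exp(TΛ)·x_0 + ∑_{j=1}^n Ψ_j·exp(τΛᵀ)·W_j·x_0. Consequently, if Ĥ is invertible, then y(T) = Ĥ⁻¹·( exp(TΛ)·x_0 + ∑_{j=1}^n Ψ_j·exp(τΛᵀ)·W_j·x_0 ), and there is exactly one function y satisfying the integral equation. -/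
open Matrix MeasureTheory
open scoped Matrix

noncomputable section

/-!
At `t = T` the kernel `Φⱼ(T)` is `Ψⱼ`, so the integral equation becomes a linear equation for the
terminal value alone, which rearranges to `Ĥ·y(T) = exp(TΛ)·x₀ + ∑ⱼ Ψⱼ·exp(τΛᵀ)·Wⱼ·x₀`. Since the
right-hand side of the equation sees `y` only through `y(T)`, invertibility of `Ĥ` pins down `y(T)`
and with it the whole solution.
-/

namespace Matrix

variable {ι m R : Type*} [Fintype ι] [Fintype m] [DecidableEq m] [Ring R]

theorem one_add_sum_mul_mulVec_eq_of_eq_sub_sum {Ψ M : ι → Matrix m m R} {a v : m → R}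
    {w : ι → m → R} (hv : v = a - ∑ j, Ψ j *ᵥ (M j *ᵥ v - w j)) :
    (1 + ∑ j, Ψ j * M j) *ᵥ v = a + ∑ j, Ψ j *ᵥ w j := by
  rw [add_mulVec, one_mulVec, sum_mulVec]
  simp only [← mulVec_mulVec, mulVec_sub, Finset.sum_sub_distrib] at hv ⊢
  nth_rw 1 [hv]
  abel

end Matrix

namespace GameData

variable {n : ℕ} (G : GameData n)

def IsStubbornSolution (x0 : Fin n → ℝ) (y : ℝ → Fin n → ℝ) : Prop :=
  ∀ t ∈ Set.Icc (0:ℝ) G.T, y t =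
    (mexp (t • G.Λ)).mulVec x0 -
      ∑ j : Fin n, (G.Phi G.T j t).mulVec
        ((G.What j + ((1 - G.ω j) / G.d j) • G.Lhat j).mulVec (y G.T) -
          (mexp (G.τ • G.Λᵀ)).mulVec ((G.W j).mulVec x0))

variable {G}

theorem Valid.T_nonneg (hG : G.Valid) : 0 ≤ G.T :=
  sub_nonneg.mpr hG.2.1.le

namespace IsStubbornSolution

variable {x0 : Fin n → ℝ} {y z : ℝ → Fin n → ℝ}

theorem hhat_mulVec_terminal (hy : G.IsStubbornSolution x0 y) (hT : 0 ≤ G.T) :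
    G.Hhat.mulVec (y G.T) =
      (mexp (G.T • G.Λ)).mulVec x0 +
        ∑ j : Fin n, (G.Psi j).mulVec ((mexp (G.τ • G.Λᵀ)).mulVec ((G.W j).mulVec x0)) :=
  Matrix.one_add_sum_mul_mulVec_eq_of_eq_sub_sum (hy G.T ⟨hT, le_rfl⟩)

theorem eq_of_terminal_eq (hy : G.IsStubbornSolution x0 y) (hz : G.IsStubbornSolution x0 z)
    (hT : z G.T = y G.T) : ∀ t ∈ Set.Icc (0:ℝ) G.T, z t = y t := by
  intro t ht
  rw [hy t ht, hz t ht, hT]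

end IsStubbornSolution

end GameData

/-- If `y : [0,T] → ℝⁿ` satisfies the stubborn integral equation
`y(t) = exp(tΛ)·x₀ − ∑ⱼ (∫₀ᵗ exp((t−s)Λ)·Sⱼ·exp((T−s)Λᵀ) ds)·((Ŵⱼ + ((1−ωⱼ)/dⱼ)·L̂ⱼ)·y(T) − exp(τΛᵀ)·Wⱼ·x₀)`,
then `Ĥ·y(T) = exp(TΛ)·x₀ + ∑ⱼ Ψⱼ·exp(τΛᵀ)·Wⱼ·x₀`; consequently if `Ĥ` is invertible then
`y(T) = Ĥ⁻¹·(exp(TΛ)·x₀ + ∑ⱼ Ψⱼ·exp(τΛᵀ)·Wⱼ·x₀)` and the solution is unique. -/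
theorem statement_14 {n : ℕ} (G : GameData n) (hG : G.Valid) (x0 : Fin n → ℝ)
    (y : ℝ → Fin n → ℝ)
    (hy : ∀ t ∈ Set.Icc (0:ℝ) G.T, y t =
      (mexp (t • G.Λ)).mulVec x0 -
        ∑ j : Fin n, (G.Phi G.T j t).mulVec
          ((G.What j + ((1 - G.ω j) / G.d j) • G.Lhat j).mulVec (y G.T) -
            (mexp (G.τ • G.Λᵀ)).mulVec ((G.W j).mulVec x0))) :
    G.Hhat.mulVec (y G.T) =
      (mexp (G.T • G.Λ)).mulVec x0 +
        ∑ j : Fin n, (G.Psi j).mulVec ((mexp (G.τ • G.Λᵀ)).mulVec ((G.W j).mulVec x0)) ∧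
      (IsUnit G.Hhat →
        y G.T = G.Hhat⁻¹.mulVec
          ((mexp (G.T • G.Λ)).mulVec x0 +
            ∑ j : Fin n,
              (G.Psi j).mulVec ((mexp (G.τ • G.Λᵀ)).mulVec ((G.W j).mulVec x0))) ∧
          ∀ z : ℝ → Fin n → ℝ,
            (∀ t ∈ Set.Icc (0:ℝ) G.T, z t =
              (mexp (t • G.Λ)).mulVec x0 -
                ∑ j : Fin n, (G.Phi G.T j t).mulVec
                  ((G.What j + ((1 - G.ω j) / G.d j) • G.Lhat j).mulVec (z G.T) -
                    (mexp (G.τ • G.Λᵀ)).mulVec ((G.W j).mulVec x0))) →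
            ∀ t ∈ Set.Icc (0:ℝ) G.T, z t = y t) := by
  have hyT := GameData.IsStubbornSolution.hhat_mulVec_terminal hy hG.T_nonneg
  refine ⟨hyT, fun hH => ⟨?_, fun z hz => ?_⟩⟩
  · rw [← hyT, Matrix.mulVec_mulVec,
      Matrix.nonsing_inv_mul _ ((Matrix.isUnit_iff_isUnit_det _).mp hH), Matrix.one_mulVec]
  · have hzT := GameData.IsStubbornSolution.hhat_mulVec_terminal hz hG.T_nonneg
    exact GameData.IsStubbornSolution.eq_of_terminal_eq hy hz
      (Matrix.mulVec_injective_of_isUnit hH (hzT.trans hyT.symm))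
end
end

section
/- (Theorem 2, trajectory part.) Assume Ĥ is invertible and let x_0 ∈ ℝⁿ. Set z = Ĥ⁻¹·( exp(TΛ)·x_0 + ∑_{j=1}^n Ψ_j·exp(τΛᵀ)·W_j·x_0 ), and let u* be the profile with u*_i(t) = −(1/r_i)·B̂_iᵀ·exp((T−t)Λᵀ)·( (Ŵ_i + ((1−ω_i)/d_i)·L̂_i)·z − exp(τΛᵀ)·W_i·x_0 ) for t ∈ [0,T] and u*_i(t) = 0 for t ∉ [0,T]. Then its trajectory x* = x_{u*} from x_0 satisfies x*(τ) = exp(τΛ)·x_0 and, for every t ∈ [0,T], x*(t+τ) = exp(tΛ)·x*(τ) − exp(τΛ)·∑_{j=1}^n ( ∫₀ᵗ exp((t−s)Λ)·S_j·exp((T−s)Λᵀ) ds )·( (Ŵ_j + ((1−ω_j)/d_j)·L̂_j)·z − exp(τΛᵀ)·W_j·x_0 ). -/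
open Matrix MeasureTheory
open scoped Matrix

noncomputable section

/-!
Since the delayed input is switched on only at time `τ`, `x*(τ) = exp(τΛ)·x₀`, and the shift
`s ↦ s - τ` together with `Bⱼ = exp(τΛ)·B̂ⱼ` gives `x*(t + τ) = exp(τΛ)·y(t)`, where `y` is
the trajectory of the delay-free system driven by the `B̂ⱼ`. The equilibrium control is
`uⱼ(s) = -(1/rⱼ)·B̂ⱼᵀ·exp((T-s)Λᵀ)·vⱼ` for fixed vectors `vⱼ`, so each input term
`exp((t-s)Λ)·B̂ⱼ·uⱼ(s)` equals `-exp((t-s)Λ)·Sⱼ·exp((T-s)Λᵀ)·vⱼ`, whose integral over `[0,t]`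
is `Φⱼ(t)·vⱼ`.
-/

section MatrixExponential

variable {n : ℕ} (Λ : Matrix (Fin n) (Fin n) ℝ)

theorem mexp_zero_smul : mexp ((0 : ℝ) • Λ) = 1 := by
  rw [zero_smul]
  exact NormedSpace.exp_zero

theorem mexp_add_smul (a b : ℝ) : mexp ((a + b) • Λ) = mexp (a • Λ) * mexp (b • Λ) := by
  rw [add_smul]
  exact Matrix.exp_add_of_commute _ _ (((Commute.refl Λ).smul_left a).smul_right b)

theorem mexp_smul_mul_comm (a b : ℝ) :
    mexp (a • Λ) * mexp (b • Λ) = mexp (b • Λ) * mexp (a • Λ) := by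
  rw [← mexp_add_smul, ← mexp_add_smul, add_comm]

theorem mexp_smul_mul_neg_smul (a : ℝ) : mexp (a • Λ) * mexp ((-a) • Λ) = 1 := by
  rw [← mexp_add_smul, add_neg_cancel, mexp_zero_smul]

open scoped Norms.Operator in
theorem continuous_mexp_smul_s16 : Continuous fun s : ℝ => mexp (s • Λ) :=
  NormedSpace.exp_continuous.comp (continuous_id.smul continuous_const)

theorem continuous_mexp_mul_mul_mexp_transpose (S : Matrix (Fin n) (Fin n) ℝ) (a b : ℝ) :
    Continuous fun s : ℝ => mexp ((a - s) • Λ) * S * mexp ((b - s) • Λᵀ) :=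
  (((continuous_mexp_smul_s16 Λ).comp (continuous_const.sub continuous_id)).matrix_mul
    continuous_const).matrix_mul
    ((continuous_mexp_smul_s16 Λᵀ).comp (continuous_const.sub continuous_id))

end MatrixExponential

section Integrals

open intervalIntegral

theorem intervalIntegral_eq_of_eqOn_Ioo_zero {E : Type*} [NormedAddCommGroup E]
    [NormedSpace ℝ E] {f : ℝ → E} {a b c : ℝ} (hab : a ≤ b) (hbc : b ≤ c)
    (hf : ∀ x ∈ Set.Ioo a b, f x = 0) : ∫ x in a..c, f x = ∫ x in b..c, f x := by
  rw [integral_of_le (hab.trans hbc), integral_of_le hbc]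
  refine setIntegral_eq_of_subset_of_ae_sdiff_eq_zero measurableSet_Ioc.nullMeasurableSet
    (Set.Ioc_subset_Ioc_left hab) ?_
  filter_upwards [measure_eq_zero_iff_ae_notMem.mp (measure_singleton b)] with x hxb hx
  exact hf x ⟨hx.1.1, lt_of_le_of_ne (not_lt.mp fun h => hx.2 ⟨h, hx.1.2⟩) hxb⟩

-- `M *ᵥ ·` is a continuous linear equivalence, so no integrability of `f` is needed.
theorem intervalIntegral_mulVec_of_isUnit {m : Type*} [Fintype m] [DecidableEq m]
    {M : Matrix m m ℝ} (hM : IsUnit M) (f : ℝ → m → ℝ) (a b : ℝ) :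
    ∫ s in a..b, M *ᵥ f s = M *ᵥ ∫ s in a..b, f s := by
  let L := (Matrix.toLinearEquiv' M hM.invertible).toContinuousLinearEquiv
  have hL : ∀ x, L x = M *ᵥ x := fun _ => rfl
  simp only [intervalIntegral, ← hL, L.integral_comp_comm, map_sub]

theorem eval_intervalIntegral {ι : Type*} [Fintype ι] {f : ℝ → ι → ℝ} {a b : ℝ}
    (hf : ∀ i, IntervalIntegrable (fun s => f s i) volume a b) (i : ι) :
    (∫ s in a..b, f s) i = ∫ s in a..b, f s i := by
  simp only [intervalIntegral, Pi.sub_apply, eval_integral (fun j => (hf j).1),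
    eval_integral (fun j => (hf j).2)]

theorem of_intervalIntegral_mulVec {m k : Type*} [Fintype m] [Fintype k] {M : ℝ → Matrix m k ℝ}
    {a b : ℝ} (hM : ∀ i j, IntervalIntegrable (fun s => M s i j) volume a b) (v : k → ℝ) :
    (Matrix.of fun i j => ∫ s in a..b, M s i j) *ᵥ v = ∫ s in a..b, M s *ᵥ v := by
  have hint : ∀ i j, IntervalIntegrable (fun s => M s i j * v j) volume a b := fun i j =>
    (hM i j).mul_const (v j)
  have hrow : ∀ i, IntervalIntegrable (fun s => (M s *ᵥ v) i) volume a b := fun i => by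
    simpa only [mulVec, dotProduct, ← Finset.sum_fn] using
      IntervalIntegrable.sum Finset.univ fun j _ => hint i j
  ext i
  rw [eval_intervalIntegral hrow]
  simp only [mulVec, dotProduct, of_apply, integral_finsetSum fun j _ => hint i j,
    intervalIntegral.integral_mul_const]

end Integrals

namespace GameData

variable {n : ℕ} (G : GameData n)

theorem mexp_mulVec_Bhat (i : Fin n) : mexp (G.τ • G.Λ) *ᵥ G.Bhat i = G.B i := by
  rw [Bhat, mulVec_mulVec, mexp_smul_mul_neg_smul, one_mulVec]

theorem S_mulVec (i : Fin n) (w : Fin n → ℝ) :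
    G.S i *ᵥ w = (1 / G.r i * (G.Bhat i ⬝ᵥ w)) • G.Bhat i := by
  rw [S, smul_mulVec, vecMulVec_mulVec, op_smul_eq_smul, smul_smul]

theorem xtraj_add_delay (hτ : 0 ≤ G.τ) (x0 : Fin n → ℝ) {u : Fin n → ℝ → ℝ}
    (hu : ∀ j, ∀ s < 0, u j s = 0) {t : ℝ} (ht : 0 ≤ t) :
    G.xtraj x0 u (t + G.τ) = mexp (G.τ • G.Λ) *ᵥ G.ytraj x0 u t := by
  have hshift : ∫ s in (0:ℝ)..t + G.τ, mexp ((t + G.τ - s) • G.Λ) *ᵥ ∑ j, u j (s - G.τ) • G.B j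
      = ∫ σ in -G.τ..t, mexp ((t - σ) • G.Λ) *ᵥ ∑ j, u j σ • G.B j := by
    simpa only [zero_sub, add_sub_cancel_right, sub_sub_eq_add_sub] using
      intervalIntegral.integral_comp_sub_right
        (fun σ => mexp ((t - σ) • G.Λ) *ᵥ ∑ j, u j σ • G.B j) (a := 0) (b := t + G.τ) G.τ
  have hdrop : ∫ σ in -G.τ..t, mexp ((t - σ) • G.Λ) *ᵥ ∑ j, u j σ • G.B j
      = ∫ σ in (0:ℝ)..t, mexp ((t - σ) • G.Λ) *ᵥ ∑ j, u j σ • G.B j :=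
    intervalIntegral_eq_of_eqOn_Ioo_zero (by linarith) ht fun σ hσ => by
      simp [hu _ σ hσ.2]
  have hpull : ∫ σ in (0:ℝ)..t, mexp ((t - σ) • G.Λ) *ᵥ ∑ j, u j σ • G.B j
      = mexp (G.τ • G.Λ) *ᵥ ∫ σ in (0:ℝ)..t, mexp ((t - σ) • G.Λ) *ᵥ ∑ j, u j σ • G.Bhat j := by
    rw [← intervalIntegral_mulVec_of_isUnit (M := mexp (G.τ • G.Λ)) (Matrix.isUnit_exp _)]
    refine intervalIntegral.integral_congr fun σ _ => ?_
    simp only [← G.mexp_mulVec_Bhat, ← mulVec_smul, ← mulVec_sum, mulVec_mulVec,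
      mexp_smul_mul_comm]
  rw [xtraj, ytraj, hshift, hdrop, hpull, mulVec_add, mulVec_mulVec, ← mexp_add_smul,
    add_comm G.τ t]

theorem ytraj_zero (y0 : Fin n → ℝ) (u : Fin n → ℝ → ℝ) : G.ytraj y0 u 0 = y0 := by
  rw [ytraj, mexp_zero_smul, one_mulVec, intervalIntegral.integral_same, add_zero]

theorem xtraj_delay (hτ : 0 ≤ G.τ) (x0 : Fin n → ℝ) {u : Fin n → ℝ → ℝ}
    (hu : ∀ j, ∀ s < 0, u j s = 0) : G.xtraj x0 u G.τ = mexp (G.τ • G.Λ) *ᵥ x0 := by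
  simpa only [zero_add, ytraj_zero] using G.xtraj_add_delay hτ x0 hu le_rfl

theorem Phi_mulVec (T' : ℝ) (i : Fin n) (t : ℝ) (v : Fin n → ℝ) :
    G.Phi T' i t *ᵥ v =
      ∫ s in (0:ℝ)..t, (mexp ((t - s) • G.Λ) * G.S i * mexp ((T' - s) • G.Λᵀ)) *ᵥ v := by
  have hcont := continuous_mexp_mul_mul_mexp_transpose G.Λ (G.S i) t T'
  exact of_intervalIntegral_mulVec (fun a b => (hcont.matrix_elem a b).intervalIntegrable _ _) v

theorem ytraj_eq_of_costate_control (y0 : Fin n → ℝ) (T' : ℝ) (v : Fin n → Fin n → ℝ)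
    {u : Fin n → ℝ → ℝ} {t : ℝ} (ht : 0 ≤ t)
    (hu : ∀ j, ∀ s ∈ Set.Icc 0 t,
      u j s = -(1 / G.r j) * (G.Bhat j ⬝ᵥ mexp ((T' - s) • G.Λᵀ) *ᵥ v j)) :
    G.ytraj y0 u t = mexp (t • G.Λ) *ᵥ y0 - ∑ j, G.Phi T' j t *ᵥ v j := by
  have hint : ∀ j, IntervalIntegrable
      (fun s => (mexp ((t - s) • G.Λ) * G.S j * mexp ((T' - s) • G.Λᵀ)) *ᵥ v j) volume 0 t :=
    fun j => ((continuous_mexp_mul_mul_mexp_transpose G.Λ (G.S j) t T').matrix_mulVec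
      continuous_const).intervalIntegrable 0 t
  rw [ytraj, sub_eq_add_neg]
  congr 1
  simp only [Phi_mulVec]
  rw [← intervalIntegral.integral_finsetSum fun j _ => hint j, ← intervalIntegral.integral_neg]
  refine intervalIntegral.integral_congr fun s hs => ?_
  rw [Set.uIcc_of_le ht] at hs
  simp only [hu _ s hs, ← mulVec_mulVec, S_mulVec, mulVec_sum, ← Finset.sum_neg_distrib,
    neg_mul, neg_smul, mulVec_neg]

end GameData

theorem statement_16_general {n : ℕ} (G : GameData n) (hG : G.Valid)
    (x0 : Fin n → ℝ) (z : Fin n → ℝ)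
    (u : Fin n → ℝ → ℝ)
    (hu1 : ∀ i, ∀ t ∈ Set.Icc (0:ℝ) G.T, u i t =
      -(1 / G.r i) *
        (G.Bhat i ⬝ᵥ (mexp ((G.T - t) • G.Λᵀ)).mulVec
          ((G.What i + ((1 - G.ω i) / G.d i) • G.Lhat i).mulVec z -
            (mexp (G.τ • G.Λᵀ)).mulVec ((G.W i).mulVec x0))))
    (hu2 : ∀ i, ∀ t, t ∉ Set.Icc (0:ℝ) G.T → u i t = 0) :
    G.xtraj x0 u G.τ = (mexp (G.τ • G.Λ)).mulVec x0 ∧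
      ∀ t ∈ Set.Icc (0:ℝ) G.T,
        G.xtraj x0 u (t + G.τ) =
          (mexp (t • G.Λ)).mulVec (G.xtraj x0 u G.τ) -
            (mexp (G.τ • G.Λ)).mulVec
              (∑ j : Fin n, (G.Phi G.T j t).mulVec
                ((G.What j + ((1 - G.ω j) / G.d j) • G.Lhat j).mulVec z -
                  (mexp (G.τ • G.Λᵀ)).mulVec ((G.W j).mulVec x0))) := by
  have hτ : 0 ≤ G.τ := hG.1
  have hu : ∀ j, ∀ s < 0, u j s = 0 := fun j s hs => hu2 j s fun h => (not_lt.mpr h.1) hs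
  refine ⟨G.xtraj_delay hτ x0 hu, fun t ht => ?_⟩
  rw [G.xtraj_add_delay hτ x0 hu ht.1, G.xtraj_delay hτ x0 hu,
    G.ytraj_eq_of_costate_control x0 G.T _ ht.1 fun j s hs => hu1 j s ⟨hs.1, hs.2.trans ht.2⟩,
    mulVec_sub, mulVec_mulVec, mulVec_mulVec, mexp_smul_mul_comm]

/-- Theorem 2, trajectory part: the trajectory `x*` of the stubborn Nash equilibrium
profile from `x₀` satisfies `x*(τ) = exp(τΛ)·x₀` and, for every `t ∈ [0,T]`,
`x*(t+τ) = exp(tΛ)·x*(τ) − exp(τΛ)·∑ⱼ (∫₀ᵗ exp((t−s)Λ)·Sⱼ·exp((T−s)Λᵀ) ds)·((Ŵⱼ + ((1−ωⱼ)/dⱼ)·L̂ⱼ)·z − exp(τΛᵀ)·Wⱼ·x₀)`. -/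
theorem statement_16 {n : ℕ} (G : GameData n) (hG : G.Valid) (hH : IsUnit G.Hhat)
    (x0 : Fin n → ℝ) (z : Fin n → ℝ)
    (hz : z = G.Hhat⁻¹.mulVec
      ((mexp (G.T • G.Λ)).mulVec x0 +
        ∑ j : Fin n, (G.Psi j).mulVec ((mexp (G.τ • G.Λᵀ)).mulVec ((G.W j).mulVec x0))))
    (u : Fin n → ℝ → ℝ)
    (hu1 : ∀ i, ∀ t ∈ Set.Icc (0:ℝ) G.T, u i t =
      -(1 / G.r i) *
        (G.Bhat i ⬝ᵥ (mexp ((G.T - t) • G.Λᵀ)).mulVec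
          ((G.What i + ((1 - G.ω i) / G.d i) • G.Lhat i).mulVec z -
            (mexp (G.τ • G.Λᵀ)).mulVec ((G.W i).mulVec x0))))
    (hu2 : ∀ i, ∀ t, t ∉ Set.Icc (0:ℝ) G.T → u i t = 0) :
    G.xtraj x0 u G.τ = (mexp (G.τ • G.Λ)).mulVec x0 ∧
      ∀ t ∈ Set.Icc (0:ℝ) G.T,
        G.xtraj x0 u (t + G.τ) =
          (mexp (t • G.Λ)).mulVec (G.xtraj x0 u G.τ) -
            (mexp (G.τ • G.Λ)).mulVec
              (∑ j : Fin n, (G.Phi G.T j t).mulVec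
                ((G.What j + ((1 - G.ω j) / G.d j) • G.Lhat j).mulVec z -
                  (mexp (G.τ • G.Λᵀ)).mulVec ((G.W j).mulVec x0))) :=
  statement_16_general G hG x0 z u hu1 hu2
end
end
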